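/- Let C be a polygonal curve with vertices p_0, …, p_m and L(C) > 0. Then C is a fixed point of arclength respacing, i.e. f(p_k) = p_k for all k = 0, …, m, if and only if C is equilateral. -/

import Mathlib

open Finset Filter

noncomputable section

/-- The length of the polygonal curve with vertices `p 0, …, p m`
(also the arclength distance from `p 0` to `p m` along the curve). -/
def polyLength {dim : ℕ} (p : ℕ → EuclideanSpace ℝ (Fin dim)) (m : ℕ) : ℝ :=
  ∑ i ∈ Finset.range m, ‖p (i + 1) - p i‖

/-- `P` is the arclength-parameterized linear interpolation of the polygonal
curve with vertices `p 0, …, p m`: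
`P ((1-t)·d_{k-1} + t·d_k) = (1-t)·p_{k-1} + t·p_k` for `t ∈ [0,1]`, `k = 1, …, m`,
where `d_k = polyLength p k` is the arclength up to vertex `k`. -/
def IsArcParam {dim : ℕ} (p : ℕ → EuclideanSpace ℝ (Fin dim)) (m : ℕ)
    (P : ℝ → EuclideanSpace ℝ (Fin dim)) : Prop :=
  ∀ k : ℕ, 1 ≤ k → k ≤ m → ∀ t : ℝ, 0 ≤ t → t ≤ 1 →
    P ((1 - t) * polyLength p (k - 1) + t * polyLength p k)
      = (1 - t) • p (k - 1) + t • p k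

/-- The polygonal curve with vertices `p 0, …, p m` is equilateral:
all consecutive interpoint distances agree. -/
def IsEquilateral {dim : ℕ} (p : ℕ → EuclideanSpace ℝ (Fin dim)) (m : ℕ) : Prop :=
  ∀ k l : ℕ, 1 ≤ k → k ≤ m → 1 ≤ l → l ≤ m →
    ‖p k - p (k - 1)‖ = ‖p l - p (l - 1)‖

/-- `q 0, …, q m` are the vertices of the arclength respacing `f(C)` of the
polygonal curve `C` with vertices `p 0, …, p m`:
`q k = P (k·L(C)/m)` where `P` is the arclength parameterization of `C`;
by convention `f(C) := C` when `L(C) = 0`. -/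
def Respaces {dim : ℕ} (m : ℕ) (p q : ℕ → EuclideanSpace ℝ (Fin dim)) : Prop :=
  (polyLength p m = 0 ∧ ∀ k ≤ m, q k = p k) ∨
  (0 < polyLength p m ∧ ∃ P : ℝ → EuclideanSpace ℝ (Fin dim), IsArcParam p m P ∧
    ∀ k ≤ m, q k = P ((k : ℝ) * polyLength p m / m))

/-!
The arclength parameterization `P` is an isometry along each edge, hence (gluing at the
vertices) `1`-Lipschitz on `[0, L]`. If `C` is fixed by respacing, consecutive vertices are
images under `P` of points `L/m` apart, so every edge has length at most `L/m`; since the `m`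
edges add up to `L`, they all have length exactly `L/m`. Conversely, if every edge has
length `c`, then `d_k = k c` and `P (k L / m) = P (d_k) = p_k`.
-/

open Set
open scoped NNReal

theorem LipschitzOnWith.Icc_union {E : Type*} [PseudoMetricSpace E] {f : ℝ → E} {K : ℝ≥0}
    {a b c : ℝ} (hab : LipschitzOnWith K f (Icc a b)) (hbc : LipschitzOnWith K f (Icc b c)) :
    LipschitzOnWith K f (Icc a c) := by
  have across_b : ∀ x y, a ≤ x → x ≤ b → b ≤ y → y ≤ c → dist (f x) (f y) ≤ K * dist x y := by
    intro x y hax hxb hby hyc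
    calc dist (f x) (f y) ≤ dist (f x) (f b) + dist (f b) (f y) := dist_triangle _ _ _
      _ ≤ K * dist x b + K * dist b y :=
        add_le_add (hab.dist_le_mul x ⟨hax, hxb⟩ b ⟨hax.trans hxb, le_rfl⟩)
          (hbc.dist_le_mul b ⟨le_rfl, hby.trans hyc⟩ y ⟨hby, hyc⟩)
      _ = K * dist x y := by
        rw [← mul_add, dist_add_dist_of_mem_segment (Icc_subset_segment ⟨hxb, hby⟩)]
  refine LipschitzOnWith.of_dist_le_mul fun x ⟨hax, hxc⟩ y ⟨hay, hyc⟩ => ?_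
  rcases le_total x b with hxb | hbx <;> rcases le_total y b with hyb | hby
  · exact hab.dist_le_mul x ⟨hax, hxb⟩ y ⟨hay, hyb⟩
  · exact across_b x y hax hxb hby hyc
  · rw [dist_comm, dist_comm x]
    exact across_b y x hay hyb hbx hxc
  · exact hbc.dist_le_mul x ⟨hbx, hxc⟩ y ⟨hby, hyc⟩

section Polygon

variable {dim : ℕ} {p : ℕ → EuclideanSpace ℝ (Fin dim)} {m : ℕ}
  {P : ℝ → EuclideanSpace ℝ (Fin dim)}

theorem polyLength_zero (p : ℕ → EuclideanSpace ℝ (Fin dim)) : polyLength p 0 = 0 := by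
  simp [polyLength]

theorem polyLength_succ (p : ℕ → EuclideanSpace ℝ (Fin dim)) (k : ℕ) :
    polyLength p (k + 1) = polyLength p k + ‖p (k + 1) - p k‖ :=
  sum_range_succ _ _

theorem polyLength_nonneg (p : ℕ → EuclideanSpace ℝ (Fin dim)) (k : ℕ) : 0 ≤ polyLength p k :=
  sum_nonneg fun _ _ => norm_nonneg _

theorem polyLength_le_succ (p : ℕ → EuclideanSpace ℝ (Fin dim)) (k : ℕ) :
    polyLength p k ≤ polyLength p (k + 1) := by
  rw [polyLength_succ]
  exact le_add_of_nonneg_right (norm_nonneg _)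

theorem IsArcParam.apply_polyLength (hP : IsArcParam p m P) (hm : 1 ≤ m) {k : ℕ} (hk : k ≤ m) :
    P (polyLength p k) = p k := by
  rcases k with _ | k
  · simpa [polyLength_zero] using hP 1 le_rfl hm 0 le_rfl zero_le_one
  · simpa using hP (k + 1) (by omega) hk 1 zero_le_one le_rfl

theorem IsArcParam.lipschitzOnWith_Icc_succ (hP : IsArcParam p m P) {k : ℕ} (hk : k < m) :
    LipschitzOnWith 1 P (Icc (polyLength p k) (polyLength p (k + 1))) := by
  have hseg : ∀ t ∈ Icc (0 : ℝ) 1, P ((1 - t) * polyLength p k + t * polyLength p (k + 1))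
      = (1 - t) • p k + t • p (k + 1) := fun t ⟨ht₀, ht₁⟩ => by
    simpa using hP (k + 1) (by omega) hk t ht₀ ht₁
  rw [← segment_eq_Icc (polyLength_le_succ p k), segment_eq_image]
  refine LipschitzOnWith.mk_one ?_
  rintro _ ⟨s, hs, rfl⟩ _ ⟨t, ht, rfl⟩
  simp only [smul_eq_mul]
  rw [hseg s hs, hseg t ht, dist_eq_norm, Real.dist_eq, polyLength_succ]
  have hvec : (1 - s) • p k + s • p (k + 1) - ((1 - t) • p k + t • p (k + 1))
      = (s - t) • (p (k + 1) - p k) := by module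
  have hreal : (1 - s) * polyLength p k + s * (polyLength p k + ‖p (k + 1) - p k‖)
      - ((1 - t) * polyLength p k + t * (polyLength p k + ‖p (k + 1) - p k‖))
      = (s - t) * ‖p (k + 1) - p k‖ := by ring
  rw [hvec, hreal, norm_smul, abs_mul, abs_norm, Real.norm_eq_abs]

theorem IsArcParam.lipschitzOnWith (hP : IsArcParam p m P) {k : ℕ} (hk : k ≤ m) :
    LipschitzOnWith 1 P (Icc 0 (polyLength p k)) := by
  induction k with
  | zero =>
    rw [polyLength_zero, Set.Icc_self]
    exact LipschitzOnWith.mk_one fun x hx y hy => by simp_all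
  | succ k ih => exact (ih (by omega)).Icc_union (hP.lipschitzOnWith_Icc_succ hk)

theorem IsEquilateral.polyLength_eq (h : IsEquilateral p m) {k : ℕ} (hk : k ≤ m) :
    polyLength p k = k * ‖p 1 - p 0‖ := by
  induction k with
  | zero => simp [polyLength_zero]
  | succ k ih =>
    have hedge : ‖p (k + 1) - p k‖ = ‖p 1 - p 0‖ := by
      simpa using h (k + 1) 1 (by omega) hk le_rfl (by omega)
    rw [polyLength_succ, ih (by omega), hedge]
    push_cast
    ring

theorem isEquilateral_of_norm_sub_le (hm : m ≠ 0)
    (h : ∀ i < m, ‖p (i + 1) - p i‖ ≤ polyLength p m / m) : IsEquilateral p m := by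
  have hsum : ∑ i ∈ range m, ‖p (i + 1) - p i‖ = ∑ i ∈ range m, polyLength p m / m := by
    rw [sum_const, card_range, nsmul_eq_mul, mul_div_cancel₀ _ (by positivity)]
    rfl
  have hall := (sum_eq_sum_iff_of_le fun i hi => h i (mem_range.1 hi)).1 hsum
  have hedge : ∀ k, 1 ≤ k → k ≤ m → ‖p k - p (k - 1)‖ = polyLength p m / m := by
    intro k hk hkm
    obtain ⟨i, rfl⟩ : ∃ i, k = i + 1 := ⟨k - 1, by omega⟩
    simpa using hall i (mem_range.2 (by omega))
  intro k l hk hkm hl hlm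
  rw [hedge k hk hkm, hedge l hl hlm]

theorem IsArcParam.isEquilateral_of_apply_eq (hP : IsArcParam p m P) (hm : 1 ≤ m)
    (hfix : ∀ k ≤ m, P ((k : ℝ) * polyLength p m / m) = p k) : IsEquilateral p m := by
  set L := polyLength p m
  refine isEquilateral_of_norm_sub_le (by omega) fun i hi => ?_
  have hL : 0 ≤ L := polyLength_nonneg p m
  have hm₀ : (0 : ℝ) < m := Nat.cast_pos.2 hm
  have hmem : ∀ k ≤ m, (k : ℝ) * L / m ∈ Icc 0 L := fun k hk => by
    refine ⟨by positivity, ?_⟩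
    rw [div_le_iff₀ hm₀, mul_comm L]
    exact mul_le_mul_of_nonneg_right (Nat.cast_le.2 hk) hL
  rw [← hfix (i + 1) hi, ← hfix i hi.le, ← dist_eq_norm]
  calc _ ≤ dist ((↑(i + 1) : ℝ) * L / m) (i * L / m) := by
        simpa using (hP.lipschitzOnWith le_rfl).dist_le_mul _ (hmem _ hi) _ (hmem _ hi.le)
    _ = L / m := by
        rw [Real.dist_eq, Nat.cast_succ, add_mul, one_mul, add_div, add_sub_cancel_left]
        exact abs_of_nonneg (div_nonneg hL hm₀.le)

theorem IsArcParam.apply_eq_of_isEquilateral (hP : IsArcParam p m P) (hm : 1 ≤ m)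
    (h : IsEquilateral p m) {k : ℕ} (hk : k ≤ m) :
    P ((k : ℝ) * polyLength p m / m) = p k := by
  rw [h.polyLength_eq le_rfl, mul_div_assoc,
    mul_div_cancel_left₀ _ (Nat.cast_ne_zero.2 (by omega : m ≠ 0)), ← h.polyLength_eq hk]
  exact hP.apply_polyLength hm hk

end Polygon

theorem stmt14_general {dim m : ℕ} (hm : 1 ≤ m) (p : ℕ → EuclideanSpace ℝ (Fin dim))
    (P : ℝ → EuclideanSpace ℝ (Fin dim)) (hP : IsArcParam p m P)
    (q : ℕ → EuclideanSpace ℝ (Fin dim))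
    (hq : ∀ k ≤ m, q k = P ((k : ℝ) * polyLength p m / m)) :
    (∀ k ≤ m, q k = p k) ↔ IsEquilateral p m := by
  have hfix : (∀ k ≤ m, q k = p k) ↔ ∀ k ≤ m, P ((k : ℝ) * polyLength p m / m) = p k :=
    forall₂_congr fun k hk => by rw [hq k hk]
  rw [hfix]
  exact ⟨hP.isEquilateral_of_apply_eq hm, fun h _ hk => hP.apply_eq_of_isEquilateral hm h hk⟩

/-- `C` is a fixed point of arclength respacing iff `C` is equilateral. -/
theorem stmt14 {dim m : ℕ} (hm : 1 ≤ m) (p : ℕ → EuclideanSpace ℝ (Fin dim))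
    (hL : 0 < polyLength p m)
    (P : ℝ → EuclideanSpace ℝ (Fin dim)) (hP : IsArcParam p m P)
    (q : ℕ → EuclideanSpace ℝ (Fin dim))
    (hq : ∀ k ≤ m, q k = P ((k : ℝ) * polyLength p m / m)) :
    (∀ k ≤ m, q k = p k) ↔ IsEquilateral p m :=
  stmt14_general hm p P hP q hq
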